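/- Let n, r, d be integers with 1 ≤ r ≤ n and d ≥ 1. Define N(n; d,…,d) := d^r · Σ_{e=0}^{n−r} (−1)^e C(n,e) · Σ_{(a_1,…,a_r)∈ℕ^r, a_1+⋯+a_r = n−r−e} d^{a_1+⋯+a_r}, and define M(n; d,…,d) := N(n; d,…,d) − (−1)^{n−r} if n > r, and M(n; d,…,d) := N(n; d,…,d) if n = r. Then C(n−1, r−1) · (d−1)^n ≤ M(n; d,…,d) ≤ C(n−1, r−1) · d^n. -/

import Mathlib

open Finset

lemma length_adt : ∀ k n : ℕ, (List.Nat.antidiagonalTuple k n).length = (n + k - 1).choose n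
  | 0, 0 => rfl
  | 0, n + 1 => by simp [Nat.choose_eq_zero_of_lt]
  | k + 1, n => by
    rw [List.Nat.antidiagonalTuple, List.length_flatMap]
    rw [List.Nat.antidiagonal, List.map_map]
    have h1 : ∀ i ∈ List.range (n+1), (Function.comp (List.length ∘ fun x : ℕ × ℕ =>
        (List.Nat.antidiagonalTuple k x.2).map (fun y => (Fin.cons x.1 y : Fin (k+1) → ℕ)))
        (fun i => (i, n - i))) i = ((n - i) + k - 1).choose (n - i) := by
      intro i _
      simp only [Function.comp]
      rw [List.length_map, length_adt]
    rw [show List.map ((fun a => (List.map (fun x => (Fin.cons a.1 x : Fin (k+1) → ℕ))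
        (List.Nat.antidiagonalTuple k a.2)).length) ∘ fun i => (i, n - i)) (List.range (n+1))
        = List.map (fun i => ((n - i) + k - 1).choose (n - i)) (List.range (n+1))
        from List.map_congr_left h1]
    have h4 : (List.map (fun i => ((n - i) + k - 1).choose (n - i)) (List.range (n+1))).sum
        = ∑ i ∈ range (n+1), ((n - i) + k - 1).choose (n - i) := rfl
    rw [h4]
    rcases Nat.eq_zero_or_pos k with hk | hk
    · subst hk
      rw [Finset.sum_eq_single_of_mem n (Finset.self_mem_range_succ n)]
      · simp
      · intro b hb hbn
        rw [mem_range] at hb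
        exact Nat.choose_eq_zero_of_lt (by omega)
    have h5 : ∑ i ∈ range (n+1), (n - i + k - 1).choose (n - i)
        = ∑ i ∈ range (n+1), ((k-1) + i).choose (k-1) := by
      rw [← Finset.sum_range_reflect (fun i => ((k-1) + i).choose (k-1)) (n+1)]
      apply Finset.sum_congr rfl
      intro i hi
      rw [mem_range] at hi
      rw [← Nat.choose_symm (by omega : k - 1 ≤ (k-1) + (n + 1 - 1 - i))]
      congr 1 <;> omega
    rw [h5]
    have h3 := Nat.sum_Icc_choose (n + k - 1) (k - 1)
    rw [← Finset.Ico_add_one_right_eq_Icc, Finset.sum_Ico_eq_sum_range,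
      show n + k - 1 + 1 - (k - 1) = n + 1 by omega] at h3
    rw [h3, show n + k - 1 + 1 = n + k by omega, show k - 1 + 1 = k by omega,
      show n + (k + 1) - 1 = n + k by omega,
      ← Nat.choose_symm (by omega : n ≤ n + k), show n + k - n = k by omega]

lemma card_adt (k n : ℕ) : (Finset.Nat.antidiagonalTuple k n).card
    = (n + k - 1).choose n := by
  rw [show (Finset.Nat.antidiagonalTuple k n).card
    = (List.Nat.antidiagonalTuple k n).length from rfl, length_adt]

lemma pascal_split (p M : ℕ) (X : ℕ → ℤ) :
    ∑ e ∈ range (M+1), (-1:ℤ)^e * ((p+1).choose e) * X e =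
      ∑ e ∈ range (M+1), (-1:ℤ)^e * (p.choose e) * X e
      - ∑ e ∈ range M, (-1:ℤ)^e * (p.choose e) * X (e+1) := by
  rw [Finset.sum_range_succ' (fun e => (-1:ℤ)^e * ((p+1).choose e) * X e) M,
    Finset.sum_range_succ' (fun e => (-1:ℤ)^e * (p.choose e) * X e) M]
  have h : ∀ e, (-1:ℤ)^(e+1) * ((p+1).choose (e+1)) * X (e+1)
      = (-1:ℤ)^(e+1) * (p.choose (e+1)) * X (e+1) - (-1:ℤ)^e * (p.choose e) * X (e+1) := by
    intro e
    rw [Nat.choose_succ_succ]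
    push_cast
    ring
  rw [Finset.sum_congr rfl (fun e _ => h e), Finset.sum_sub_distrib]
  simp
  ring

lemma altV (t : ℕ) : ∀ p q : ℕ, p ≤ q →
    ∑ e ∈ range (p+1), (-1:ℤ)^e * (p.choose e) * ((q-e).choose t) =
      if p ≤ t then (((q-p).choose (t-p) : ℕ) : ℤ) else 0 := by
  intro p
  induction p with
  | zero => intro q hq; simp
  | succ p ih =>
    intro q hq
    rw [pascal_split p (p+1) (fun e => (((q-e).choose t : ℕ) : ℤ))]
    rw [Finset.sum_range_succ, Nat.choose_succ_self]
    simp only [Nat.cast_zero, mul_zero, zero_mul, add_zero]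
    have h2 : ∑ e ∈ range (p+1), (-1:ℤ)^e * (p.choose e) * ((q-(e+1)).choose t)
        = ∑ e ∈ range (p+1), (-1:ℤ)^e * (p.choose e) * (((q-1)-e).choose t) := by
      apply Finset.sum_congr rfl
      intro e he
      rw [show q - (e+1) = q - 1 - e by omega]
    rw [h2, ih q (by omega), ih (q-1) (by omega)]
    by_cases h3 : p + 1 ≤ t
    · rw [if_pos (by omega), if_pos (by omega), if_pos h3]
      have hP := Nat.choose_succ_succ (q-1-p) (t-p-1)
      simp only [Nat.succ_eq_add_one] at hP
      rw [show (q-1-p)+1 = q - p by omega, show (t-p-1)+1 = t-p by omega] at hP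
      rw [hP, show q-1-p = q-(p+1) by omega, show t-p-1 = t-(p+1) by omega]
      push_cast
      ring
    · by_cases h4 : p ≤ t
      · have ht : t = p := by omega
        subst ht
        rw [if_pos le_rfl, if_pos le_rfl, if_neg h3]
        simp
      · rw [if_neg h4, if_neg h4, if_neg h3]
        ring

lemma Gc : ∀ m : ℕ, ∀ n : ℕ, m < n →
    ∑ e ∈ range (m+1), (-1:ℤ)^e * (n.choose e) * ((n-1-e).choose (n-1-m)) = (-1)^m := by
  intro m
  induction m with
  | zero => intro n hn; simp
  | succ m ih =>
    intro n hn
    obtain ⟨p, rfl⟩ : ∃ p, n = p + 1 := ⟨n - 1, by omega⟩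
    simp only [Nat.add_sub_cancel]
    rw [pascal_split p (m+1) (fun e => (((p-e).choose (p-(m+1)) : ℕ) : ℤ))]
    have hA : ∑ e ∈ range (m+1+1), (-1:ℤ)^e * (p.choose e) * ((p-e).choose (p-(m+1)))
        = ∑ e ∈ range (p+1), (-1:ℤ)^e * (p.choose e) * ((p-e).choose (p-(m+1))) := by
      apply Finset.sum_subset (Finset.range_subset_range.mpr (by omega : m+1+1 ≤ p+1))
      intro e he hne
      rw [mem_range] at he hne
      rw [Nat.choose_eq_zero_of_lt (by omega : p - e < p - (m+1))]
      simp
    have hB : ∑ e ∈ range (m+1), (-1:ℤ)^e * (p.choose e) * ((p-(e+1)).choose (p-(m+1)))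
        = ∑ e ∈ range (m+1), (-1:ℤ)^e * (p.choose e) * ((p-1-e).choose (p-1-m)) := by
      apply Finset.sum_congr rfl
      intro e he
      rw [show p - (e+1) = p-1-e by omega, show p - (m+1) = p-1-m by omega]
    rw [hA, hB, altV _ p p le_rfl, if_neg (by omega), ih p (by omega)]
    ring

lemma cmc (n e j : ℕ) :
    ((n.choose e : ℤ)) * ((n - e).choose j) = (n.choose j) * ((n - j).choose e) := by
  by_cases h : e + j ≤ n
  · have he : e ≤ n := by omega
    have hj : j ≤ n - e := by omega
    have hj' : j ≤ n := by omega
    have he' : e ≤ n - j := by omega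
    have key : n.choose e * ((n - e).choose j) = n.choose j * ((n - j).choose e) := by
      apply Nat.eq_of_mul_eq_mul_right
        (Nat.mul_pos (Nat.mul_pos e.factorial_pos j.factorial_pos) (n-e-j).factorial_pos)
      have f1 := Nat.choose_mul_factorial_mul_factorial hj
      have f2 := Nat.choose_mul_factorial_mul_factorial he
      have f3 := Nat.choose_mul_factorial_mul_factorial he'
      have f4 := Nat.choose_mul_factorial_mul_factorial hj'
      rw [show n - j - e = n - e - j by omega] at f3
      calc n.choose e * (n - e).choose j * (e.factorial * j.factorial * (n-e-j).factorial)
          = (n.choose e * e.factorial * ((n - e).choose j * j.factorial * (n-e-j).factorial)) := by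
            ring
        _ = n.choose e * e.factorial * (n-e).factorial := by rw [f1]
        _ = n.choose e * e.factorial * (n-e).factorial * 1 := by ring
        _ = n.factorial := by rw [← f2]; ring
        _ = n.choose j * j.factorial * (n-j).factorial * 1 := by rw [← f4]; ring
        _ = n.choose j * j.factorial * ((n - j).choose e * e.factorial * (n-e-j).factorial) := by
            rw [f3]; ring
        _ = n.choose j * (n - j).choose e * (e.factorial * j.factorial * (n-e-j).factorial) := by
            ring
    exact_mod_cast congrArg (Nat.cast : ℕ → ℤ) key
  · by_cases he : e ≤ n
    · rw [Nat.choose_eq_zero_of_lt (show n - e < j by omega)]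
      rcases le_or_gt j n with hj | hj
      · rw [Nat.choose_eq_zero_of_lt (show n - j < e by omega)]
        push_cast; ring
      · rw [Nat.choose_eq_zero_of_lt hj]
        push_cast; ring
    · rw [Nat.choose_eq_zero_of_lt (show n < e by omega),
        Nat.choose_eq_zero_of_lt (show n - j < e by omega)]
      push_cast; ring

lemma keyIdentity (n r : ℕ) (hr : 1 ≤ r) (hrn : r ≤ n) (d : ℤ) :
    ∑ e ∈ range (n - r + 1), (-1:ℤ)^e * (n.choose e) * ((n-1-e).choose (r-1)) * d^(n-e)
      = (-1:ℤ)^(n-r)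
        + ∑ k ∈ Icc (n-r+1) n, (n.choose k : ℤ) * ((k-1).choose (n-r)) * (d-1)^k := by
  have hde : ∀ e ∈ range (n-r+1), d^(n-e)
      = ∑ j ∈ range (n+1), ((n-e).choose j : ℤ) * (d-1)^j := by
    intro e he
    rw [mem_range] at he
    calc d^(n-e) = ((d-1)+1)^(n-e) := by ring_nf
      _ = ∑ j ∈ range (n-e+1), (d-1)^j * 1^(n-e-j) * ((n-e).choose j) := add_pow _ _ _
      _ = ∑ j ∈ range (n+1), (d-1)^j * 1^(n-e-j) * ((n-e).choose j) := by
          apply Finset.sum_subset (Finset.range_subset_range.mpr (by omega))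
          intro j hjt hjs
          rw [mem_range] at hjt hjs
          rw [Nat.choose_eq_zero_of_lt (by omega : n - e < j)]
          simp
      _ = ∑ j ∈ range (n+1), ((n-e).choose j : ℤ) * (d-1)^j := by
          apply Finset.sum_congr rfl
          intro j hj
          rw [one_pow]
          ring
  calc ∑ e ∈ range (n - r + 1), (-1:ℤ)^e * (n.choose e) * ((n-1-e).choose (r-1)) * d^(n-e)
      = ∑ e ∈ range (n - r + 1), ∑ j ∈ range (n+1),
          (-1:ℤ)^e * (n.choose e) * ((n-1-e).choose (r-1)) * (((n-e).choose j : ℤ) * (d-1)^j) := by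
        apply Finset.sum_congr rfl
        intro e he
        rw [hde e he, Finset.mul_sum]
    _ = ∑ j ∈ range (n+1), ∑ e ∈ range (n - r + 1),
          (-1:ℤ)^e * (n.choose e) * ((n-1-e).choose (r-1)) * (((n-e).choose j : ℤ) * (d-1)^j) :=
        Finset.sum_comm
    _ = ∑ j ∈ range (n+1), (if j = 0 then (-1:ℤ)^(n-r)
          else (n.choose j : ℤ) * (if n-r+1 ≤ j then ((j-1).choose (n-r) : ℤ) else 0)) * (d-1)^j := by
        apply Finset.sum_congr rfl
        intro j hj
        rw [mem_range] at hj
        rw [show (∑ e ∈ range (n - r + 1),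
            (-1:ℤ)^e * (n.choose e) * ((n-1-e).choose (r-1)) * (((n-e).choose j : ℤ) * (d-1)^j))
          = (∑ e ∈ range (n - r + 1),
            (-1:ℤ)^e * (n.choose e) * ((n-1-e).choose (r-1)) * ((n-e).choose j : ℤ)) * (d-1)^j by
            rw [Finset.sum_mul]; apply Finset.sum_congr rfl; intro e he; ring]
        congr 1
        rcases Nat.eq_zero_or_pos j with hj0 | hj0
        · subst hj0
          rw [if_pos rfl]
          have : ∀ e ∈ range (n - r + 1),
              (-1:ℤ)^e * (n.choose e) * ((n-1-e).choose (r-1)) * ((n-e).choose 0 : ℤ)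
              = (-1:ℤ)^e * (n.choose e) * ((n-1-e).choose (n-1-(n-r))) := by
            intro e he
            rw [Nat.choose_zero_right, show n-1-(n-r) = r-1 by omega]
            push_cast
            ring
          rw [Finset.sum_congr rfl this, Gc (n-r) n (by omega)]
        · rw [if_neg (by omega)]
          have step1 : ∀ e ∈ range (n - r + 1),
              (-1:ℤ)^e * (n.choose e) * ((n-1-e).choose (r-1)) * ((n-e).choose j : ℤ)
              = (n.choose j : ℤ) * ((-1:ℤ)^e * ((n-j).choose e) * (((n-1)-e).choose (r-1))) := by
            intro e he
            have := cmc n e j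
            calc (-1:ℤ)^e * (n.choose e) * ((n-1-e).choose (r-1)) * ((n-e).choose j : ℤ)
                = ((n.choose e : ℤ) * ((n-e).choose j)) * ((-1:ℤ)^e * ((n-1-e).choose (r-1))) := by
                  ring
              _ = ((n.choose j : ℤ) * ((n-j).choose e)) * ((-1:ℤ)^e * ((n-1-e).choose (r-1))) := by
                  rw [this]
              _ = (n.choose j : ℤ) * ((-1:ℤ)^e * ((n-j).choose e) * (((n-1)-e).choose (r-1))) := by
                  ring
          rw [Finset.sum_congr rfl step1, ← Finset.mul_sum]
          congr 1
          have hsum : ∑ e ∈ range (n - r + 1),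
              (-1:ℤ)^e * ((n-j).choose e) * (((n-1)-e).choose (r-1))
              = ∑ e ∈ range ((n-j) + 1),
              (-1:ℤ)^e * ((n-j).choose e) * (((n-1)-e).choose (r-1)) := by
            rcases le_or_gt (n - r + 1) (n - j + 1) with hc | hc
            · apply Finset.sum_subset (Finset.range_subset_range.mpr hc)
              intro e het hes
              rw [mem_range] at het hes
              rw [Nat.choose_eq_zero_of_lt (show n-1-e < r-1 by omega)]
              simp
            · symm
              apply Finset.sum_subset (Finset.range_subset_range.mpr (by omega))
              intro e het hes
              rw [mem_range] at het hes
              rw [Nat.choose_eq_zero_of_lt (show n-j < e by omega)]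
              simp
          rw [hsum, altV (r-1) (n-j) (n-1) (by omega)]
          by_cases hcase : n - r + 1 ≤ j
          · rw [if_pos (by omega : n - j ≤ r - 1), if_pos hcase]
            rw [show n-1-(n-j) = j-1 by omega]
            exact_mod_cast congrArg (Nat.cast : ℕ → ℤ)
              (Nat.choose_symm_of_eq_add (show j-1 = (r-1-(n-j)) + (n-r) by omega))
          · rw [if_neg (by omega : ¬ (n - j ≤ r - 1)), if_neg hcase]
    _ = (-1:ℤ)^(n-r)
        + ∑ k ∈ Icc (n-r+1) n, (n.choose k : ℤ) * ((k-1).choose (n-r)) * (d-1)^k := by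
      rw [Finset.sum_range_succ' _ n]
      simp only [if_pos rfl, pow_zero, mul_one]
      rw [add_comm]
      congr 1
      have hre : ∀ j ∈ range n, (if j + 1 = 0 then (-1:ℤ)^(n-r)
            else (n.choose (j+1) : ℤ) * (if n-r+1 ≤ j+1 then (((j+1)-1).choose (n-r) : ℤ) else 0))
            * (d-1)^(j+1)
          = (if n-r+1 ≤ j+1 then (n.choose (j+1) : ℤ) * ((j).choose (n-r) : ℤ) * (d-1)^(j+1) else 0) := by
        intro j hj
        rw [if_neg (Nat.succ_ne_zero j)]
        by_cases hc : n-r+1 ≤ j+1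
        · rw [if_pos hc, if_pos hc, Nat.add_sub_cancel]
          try ring
        · rw [if_neg hc, if_neg hc]
          ring
      rw [Finset.sum_congr rfl hre]
      rw [show Icc (n-r+1) n = Ico (n-r+1) (n+1) by rw [Finset.Ico_add_one_right_eq_Icc]]
      rw [Finset.sum_Ico_eq_sum_range]
      have h9 : ∑ x ∈ range n, (if n-r+1 ≤ x+1 then
            (n.choose (x+1) : ℤ) * ((x).choose (n-r) : ℤ) * (d-1)^(x+1) else 0)
          = ∑ x ∈ Ico (n-r) n, (if n-r+1 ≤ x+1 then
            (n.choose (x+1) : ℤ) * ((x).choose (n-r) : ℤ) * (d-1)^(x+1) else 0) := by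
        symm
        apply Finset.sum_subset
        · rw [Finset.range_eq_Ico]
          exact Finset.Ico_subset_Ico (by omega) le_rfl
        · intro x hx hnx
          rw [mem_range] at hx
          rw [Finset.mem_Ico] at hnx
          rw [if_neg (by omega)]
      rw [h9]
      have h10 : ∀ x ∈ Ico (n-r) n, (if n-r+1 ≤ x+1 then
            (n.choose (x+1) : ℤ) * ((x).choose (n-r) : ℤ) * (d-1)^(x+1) else 0)
          = (n.choose (x+1) : ℤ) * ((x).choose (n-r) : ℤ) * (d-1)^(x+1) := by
        intro x hx
        rw [Finset.mem_Ico] at hx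
        rw [if_pos (by omega)]
      rw [Finset.sum_congr rfl h10, Finset.sum_Ico_eq_sum_range,
        show n - (n-r) = n+1-(n-r+1) by omega]
      apply Finset.sum_congr rfl
      intro i hi
      rw [show n-r+i+1 = n-r+1+i by omega, show n-r+1+i-1 = n-r+i by omega]

/-- Bounds `C(n−1,r−1)·(d−1)^n ≤ M(n;d,…,d) ≤ C(n−1,r−1)·d^n` for the quantity
`M(n;d,…,d)` built from `N(n;d,…,d)`. -/
theorem stmt2 (n r : ℕ) (d : ℤ) (hr : 1 ≤ r) (hrn : r ≤ n) (hd : 1 ≤ d) :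
    let N : ℤ := d ^ r *
      ∑ e ∈ Finset.range (n - r + 1), (-1 : ℤ) ^ e * (n.choose e : ℤ) *
        ∑ a ∈ Finset.Nat.antidiagonalTuple r (n - r - e), d ^ (∑ i, a i)
    let M : ℤ := if n = r then N else N - (-1 : ℤ) ^ (n - r)
    ((n - 1).choose (r - 1) : ℤ) * (d - 1) ^ n ≤ M ∧
      M ≤ ((n - 1).choose (r - 1) : ℤ) * d ^ n := by
  have hx1 : n - r + 1 ≤ n := by omega
  have hx2 : n - 1 = (n-r) + (r-1) := by omega
  have hx3 : ∀ e, e < n - r + 1 → n - e = r + (n-r-e) := by intro e he; omega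
  have hx4 : ∀ e, e < n - r + 1 → n-r-e + r - 1 = n-1-e := by intro e he; omega
  have hx5 : ∀ e, e < n - r + 1 → n-1-e = (n-r-e) + (r-1) := by intro e he; omega
  intro N M
  have hNdef : N = d ^ r *
      ∑ e ∈ Finset.range (n - r + 1), (-1 : ℤ) ^ e * (n.choose e : ℤ) *
        ∑ a ∈ Finset.Nat.antidiagonalTuple r (n - r - e), d ^ (∑ i, a i) := rfl
  have hMdef : M = if n = r then N else N - (-1 : ℤ) ^ (n - r) := rfl
  clear_value N M
  have hd0 : (0:ℤ) ≤ d - 1 := by linarith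
  have hinner : ∀ e ∈ range (n - r + 1),
      ∑ a ∈ Finset.Nat.antidiagonalTuple r (n - r - e), d ^ (∑ i, a i)
      = (((n-1-e).choose (r-1) : ℕ) : ℤ) * d^(n-r-e) := by
    intro e he
    rw [mem_range] at he
    have h1 : ∀ a ∈ Finset.Nat.antidiagonalTuple r (n - r - e),
        d ^ (∑ i, a i) = d ^ (n-r-e) := by
      intro a ha
      rw [Finset.Nat.mem_antidiagonalTuple.mp ha]
    rw [Finset.sum_congr rfl h1, Finset.sum_const, card_adt, nsmul_eq_mul]
    have h2 : (n-r-e + r - 1).choose (n-r-e) = (n-1-e).choose (r-1) := by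
      rw [hx4 e he]
      exact Nat.choose_symm_of_eq_add (hx5 e he)
    rw [h2]
  have hN : N = ∑ e ∈ range (n - r + 1),
      (-1:ℤ)^e * (n.choose e) * ((n-1-e).choose (r-1)) * d^(n-e) := by
    rw [hNdef]
    rw [Finset.sum_congr rfl (fun e he => by rw [hinner e he] :
      ∀ e ∈ range (n - r + 1), (-1 : ℤ) ^ e * (n.choose e : ℤ) *
        (∑ a ∈ Finset.Nat.antidiagonalTuple r (n - r - e), d ^ (∑ i, a i))
        = (-1 : ℤ) ^ e * (n.choose e : ℤ) * ((((n-1-e).choose (r-1) : ℕ) : ℤ) * d^(n-r-e)))]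
    rw [Finset.mul_sum]
    apply Finset.sum_congr rfl
    intro e he
    rw [mem_range] at he
    rw [hx3 e he, pow_add]
    ring
  have hkey := keyIdentity n r hr hrn d
  rw [← hN] at hkey
  have hpow : ∑ k ∈ range (n+1), ((n.choose k : ℕ) : ℤ) * (d-1)^k = d^n := by
    calc ∑ k ∈ range (n+1), ((n.choose k : ℕ) : ℤ) * (d-1)^k
        = ∑ k ∈ range (n+1), (d-1)^k * 1^(n-k) * ((n.choose k : ℕ) : ℤ) := by
          apply Finset.sum_congr rfl
          intro k hk
          rw [one_pow]
          ring
      _ = ((d-1)+1)^n := (add_pow _ _ _).symm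
      _ = d^n := by ring_nf
  by_cases hnr : n = r
  · subst hnr
    have hM : M = N := by rw [hMdef, if_pos rfl]
    have hMd : M = d ^ n := by
      rw [hM, hkey, Nat.sub_self, pow_zero]
      rw [← hpow, Finset.sum_range_succ' _ n]
      simp only [pow_zero, mul_one, Nat.choose_zero_right, Nat.cast_one, one_mul]
      rw [add_comm]
      congr 1
      rw [show Icc (0+1) n = Ico 1 (n+1) from by rw [Finset.Ico_add_one_right_eq_Icc],
        Finset.sum_Ico_eq_sum_range, show n + 1 - 1 = n from rfl]
      apply Finset.sum_congr rfl
      intro i hi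
      rw [Nat.add_comm 1 i]
    constructor
    · rw [hMd, Nat.choose_self, Nat.cast_one, one_mul]
      exact pow_le_pow_left₀ hd0 (by linarith) n
    · rw [hMd, Nat.choose_self, Nat.cast_one, one_mul]
  · have hM : M = ∑ k ∈ Icc (n-r+1) n,
        ((n.choose k : ℕ) : ℤ) * ((k-1).choose (n-r)) * (d-1)^k := by
      rw [hMdef, if_neg hnr, hkey]
      ring
    have hnonneg : ∀ k ∈ Icc (n-r+1) n,
        (0:ℤ) ≤ ((n.choose k : ℕ) : ℤ) * ((k-1).choose (n-r)) * (d-1)^k := by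
      intro k hk
      apply mul_nonneg (mul_nonneg (Nat.cast_nonneg _) (Nat.cast_nonneg _))
      exact pow_nonneg hd0 k
    constructor
    · rw [hM]
      have hmem : n ∈ Icc (n-r+1) n := Finset.mem_Icc.mpr ⟨hx1, le_rfl⟩
      have heq : (((n-1).choose (r-1) : ℕ) : ℤ) * (d-1)^n
          = ((n.choose n : ℕ) : ℤ) * ((n-1).choose (n-r)) * (d-1)^n := by
        rw [Nat.choose_self, Nat.choose_symm_of_eq_add hx2]
        push_cast
        ring
      rw [heq]
      exact Finset.single_le_sum hnonneg hmem
    · rw [hM]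
      have hterm : ∀ k ∈ Icc (n-r+1) n,
          ((n.choose k : ℕ) : ℤ) * ((k-1).choose (n-r)) * (d-1)^k
          ≤ (((n-1).choose (r-1) : ℕ) : ℤ) * (((n.choose k : ℕ) : ℤ) * (d-1)^k) := by
        intro k hk
        rw [Finset.mem_Icc] at hk
        have h1 : (((k-1).choose (n-r) : ℕ) : ℤ) ≤ (((n-1).choose (n-r) : ℕ) : ℤ) :=
          Int.ofNat_le.mpr (Nat.choose_le_choose (n-r) (Nat.sub_le_sub_right hk.2 1))
        have h3 : (0:ℤ) ≤ ((n.choose k : ℕ) : ℤ) * (d-1)^k :=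
          mul_nonneg (Nat.cast_nonneg _) (pow_nonneg hd0 k)
        calc ((n.choose k : ℕ) : ℤ) * ((k-1).choose (n-r)) * (d-1)^k
            = (((k-1).choose (n-r) : ℕ) : ℤ) * (((n.choose k : ℕ) : ℤ) * (d-1)^k) := by ring
          _ ≤ (((n-1).choose (n-r) : ℕ) : ℤ) * (((n.choose k : ℕ) : ℤ) * (d-1)^k) :=
              mul_le_mul_of_nonneg_right h1 h3
          _ = (((n-1).choose (r-1) : ℕ) : ℤ) * (((n.choose k : ℕ) : ℤ) * (d-1)^k) := by
              rw [Nat.choose_symm_of_eq_add hx2]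
      calc ∑ k ∈ Icc (n-r+1) n, ((n.choose k : ℕ) : ℤ) * ((k-1).choose (n-r)) * (d-1)^k
          ≤ ∑ k ∈ Icc (n-r+1) n,
              (((n-1).choose (r-1) : ℕ) : ℤ) * (((n.choose k : ℕ) : ℤ) * (d-1)^k) :=
            Finset.sum_le_sum hterm
        _ = (((n-1).choose (r-1) : ℕ) : ℤ)
              * ∑ k ∈ Icc (n-r+1) n, ((n.choose k : ℕ) : ℤ) * (d-1)^k := by
            rw [Finset.mul_sum]
        _ ≤ (((n-1).choose (r-1) : ℕ) : ℤ)
              * ∑ k ∈ range (n+1), ((n.choose k : ℕ) : ℤ) * (d-1)^k := by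
            apply mul_le_mul_of_nonneg_left _ (Nat.cast_nonneg _)
            apply Finset.sum_le_sum_of_subset_of_nonneg
            · intro k hk
              rw [Finset.mem_Icc] at hk
              rw [mem_range]
              exact Nat.lt_succ_of_le hk.2
            · intro k hk hnk
              exact mul_nonneg (Nat.cast_nonneg _) (pow_nonneg hd0 k)
        _ = (((n-1).choose (r-1) : ℕ) : ℤ) * d^n := by rw [hpow]
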